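/- On a weak para-K-manifold, every characteristic vector field ξ_i is Killing (£_{ξ_i} g = 0) and ∇_{ξ_i} ξ_j = 0 for all i, j; consequently, ker f is integrable and defines a totally geodesic Riemannian foliation with flat leaves. -/

import Mathlib

open scoped BigOperators

noncomputable section

variable (C V : Type*) [CommRing C] [Algebra ℝ C] [AddCommGroup V]
  [Module ℝ V] [Module C V] [IsScalarTower ℝ C V]

/-- A metric weak para-f-structure on a manifold, modelled algebraically:
`C` plays the role of the ring of smooth functions, `V` the `C`-module of vector fields
with Lie bracket `b` and derivation action `act` of vector fields on functions,
`g` is a compatible pseudo-Riemannian metric (with `f` of rank `2n`, encoded by `hrank`)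
and `nabla` its Levi-Civita connection (torsion-free and metric). -/
structure MWPF (p : ℕ) where
  f : V →ₗ[C] V
  Q : V →ₗ[C] V
  ξ : Fin p → V
  η : Fin p → V →ₗ[C] C
  g : V →ₗ[C] V →ₗ[C] C
  b : V → V → V
  act : V → C → C
  nabla : V → V → V
  hQbij : Function.Bijective Q
  hf2 : ∀ X, f (f X) = Q X - ∑ i, η i X • ξ i
  hf3 : ∀ X, f (f (f X)) = f (Q X)
  hetaxi : ∀ i j, η i (ξ j) = if i = j then (1 : C) else 0
  hQxi : ∀ i, Q (ξ i) = ξ i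
  hrange : ∀ X : V, X ∈ LinearMap.range f ↔ ∀ i, η i X = 0
  hgsymm : ∀ X Y, g X Y = g Y X
  hgnondeg : ∀ X, (∀ Y, g X Y = 0) → X = 0
  hrank : ∀ Z, (∀ i, η i Z = 0) → (∀ Y, g Z (f Y) = 0) → Z = 0
  hgcompat : ∀ X Y, g (f X) (f Y) = -(g X (Q Y)) + ∑ i, η i X * η i Y
  hbskew : ∀ X Y, b X Y = - b Y X
  hbaddl : ∀ X Y Z, b (X + Y) Z = b X Z + b Y Z
  hjacobi : ∀ X Y Z, b X (b Y Z) + b Y (b Z X) + b Z (b X Y) = 0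
  hactadd : ∀ X a c, act X (a + c) = act X a + act X c
  hactmul : ∀ X a c, act X (a * c) = act X a * c + a * act X c
  hactX : ∀ (a : C) X Y c, act (a • X + Y) c = a * act X c + act Y c
  hbleib : ∀ X (a : C) Y, b X (a • Y) = act X a • Y + a • b X Y
  hnab1 : ∀ (a : C) X X' Y, nabla (a • X + X') Y = a • nabla X Y + nabla X' Y
  hnabadd : ∀ X Y Z, nabla X (Y + Z) = nabla X Y + nabla X Z
  hnableib : ∀ X (a : C) Y, nabla X (a • Y) = act X a • Y + a • nabla X Y
  htors : ∀ X Y, nabla X Y - nabla Y X = b X Y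
  hmetric : ∀ X Y Z, act X (g Y Z) = g (nabla X Y) Z + g Y (nabla X Z)

namespace MWPF

variable {C V} {p : ℕ} (s : MWPF C V p)

/-- The fundamental 2-form `Φ(X,Y) = g(X, fY)`. -/
def Phi (X Y : V) : C := s.g X (s.f Y)

/-- `dη^i(X,Y) = (1/2)(X(η^i Y) - Y(η^i X) - η^i [X,Y])`. -/
def dEta (i : Fin p) (X Y : V) : C :=
  (2⁻¹ : ℝ) • (s.act X (s.η i Y) - s.act Y (s.η i X) - s.η i (s.b X Y))

/-- The Nijenhuis torsion `[f,f]`. -/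
def Nij (X Y : V) : V :=
  s.f (s.f (s.b X Y)) + s.b (s.f X) (s.f Y) - s.f (s.b (s.f X) Y) - s.f (s.b X (s.f Y))

/-- `N^(1)(X,Y) = [f,f](X,Y) - 2 Σ_i dη^i(X,Y) ξ_i`. -/
def N1 (X Y : V) : V := s.Nij X Y - (2 : ℝ) • ∑ i, s.dEta i X Y • s.ξ i

/-- The difference tensor `Q̃ = Q - id`. -/
def Qt (X : V) : V := s.Q X - X

/-- The Lie derivative of `f`: `(£_Z f)X = [Z, fX] - f[Z,X]`. -/
def Lief (Z X : V) : V := s.b Z (s.f X) - s.f (s.b Z X)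

/-- The Lie derivative of `g`: `(£_Z g)(X,Y) = Z(g(X,Y)) - g([Z,X],Y) - g(X,[Z,Y])`. -/
def Lieg (Z X Y : V) : C := s.act Z (s.g X Y) - s.g (s.b Z X) Y - s.g X (s.b Z Y)

/-- `N^(2)_i(X,Y) = (£_{fX} η^i)Y - (£_{fY} η^i)X`. -/
def N2 (i : Fin p) (X Y : V) : C :=
  (s.act (s.f X) (s.η i Y) - s.η i (s.b (s.f X) Y))
    - (s.act (s.f Y) (s.η i X) - s.η i (s.b (s.f Y) X))

/-- The exterior differential of the fundamental 2-form. -/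
def dPhi (X Y Z : V) : C := (3⁻¹ : ℝ) •
  (s.act X (s.Phi Y Z) + s.act Y (s.Phi Z X) + s.act Z (s.Phi X Y)
    - s.Phi (s.b X Y) Z - s.Phi (s.b Z X) Y - s.Phi (s.b Y Z) X)

/-- The tensor `h_i = (1/2) £_{ξ_i} f`. -/
def hmap (i : Fin p) (X : V) : V := (2⁻¹ : ℝ) • s.Lief (s.ξ i) X

/-- The tensor `N^(5)`. -/
def N5 (X Y Z : V) : C :=
  s.act (s.f Z) (s.g X (s.Qt Y)) - s.act (s.f Y) (s.g X (s.Qt Z))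
    + s.g (s.b X (s.f Z)) (s.Qt Y) - s.g (s.b X (s.f Y)) (s.Qt Z)
    + s.g (s.b Y (s.f Z) - s.b Z (s.f Y) - s.f (s.b Y Z)) (s.Qt X)

/-- The curvature tensor of `nabla`. -/
def Rm (X Y Z : V) : V :=
  s.nabla X (s.nabla Y Z) - s.nabla Y (s.nabla X Z) - s.nabla (s.b X Y) Z

end MWPF

/-! Normality evaluated on `ξ_i` gives `ξ_i(η^j Y) = η^j [ξ_i, Y]` and `f²[ξ_i, Y] = f[ξ_i, fY]`,
and `dΦ(ξ_i, X, Y) = 0` expresses `ξ_i(Φ(X,Y))` through brackets with `ξ_i`. Together they give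
`[ξ_i, ξ_j] = 0` and show that the symmetric form `£_{ξ_i} g` vanishes on `ξ_j ⊗ V` and on
`im f ⊗ im f`; since `V = im f ⊕ span ξ`, it vanishes identically. For two commuting Killing
fields of constant inner product, `g(∇_Z W, Y)` is minus itself, which gives `∇_{ξ_i} ξ_j = 0`. -/

namespace MWPF

variable {C V : Type*} [CommRing C] [AddCommGroup V] [Module C V] {p : ℕ} (s : MWPF C V p)

lemma act_zero (X : V) : s.act X 0 = 0 := by
  simpa using s.hactadd X 0 0

lemma act_one (X : V) : s.act X 1 = 0 := by
  simpa using s.hactmul X 1 1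

lemma act_eta_xi (X : V) (i j : Fin p) : s.act X (s.η i (s.ξ j)) = 0 := by
  rw [s.hetaxi]
  split
  · exact s.act_one X
  · exact s.act_zero X

lemma b_zero_left (Y : V) : s.b 0 Y = 0 := by
  simpa using s.hbaddl 0 0 Y

lemma b_add_right (Z X Y : V) : s.b Z (X + Y) = s.b Z X + s.b Z Y := by
  rw [s.hbskew, s.hbaddl, s.hbskew X, s.hbskew Y, neg_add, neg_neg, neg_neg]

lemma nabla_zero_left (Y : V) : s.nabla 0 Y = 0 := by
  simpa using s.hnab1 1 0 0 Y

lemma nabla_zero_right (X : V) : s.nabla X 0 = 0 := by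
  simpa using s.hnabadd X 0 0

lemma eta_sum_smul_xi (j : Fin p) (a : Fin p → C) : s.η j (∑ k, a k • s.ξ k) = a j := by
  simp [map_sum, s.hetaxi]

lemma sum_eta_smul_xi (i : Fin p) : ∑ k, s.η k (s.ξ i) • s.ξ k = s.ξ i := by
  simp [s.hetaxi]

lemma f_xi (i : Fin p) : s.f (s.ξ i) = 0 := by
  have hff : s.f (s.f (s.ξ i)) = 0 := by rw [s.hf2, s.hQxi, s.sum_eta_smul_xi, sub_self]
  simpa [hff, s.hQxi] using (s.hf3 (s.ξ i)).symm

lemma eta_f (i : Fin p) (X : V) : s.η i (s.f X) = 0 :=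
  (s.hrange (s.f X)).mp ⟨X, rfl⟩ i

lemma eta_Q (i : Fin p) (X : V) : s.η i (s.Q X) = s.η i X := by
  have h := congrArg (s.η i) (s.hf2 X)
  rw [s.eta_f, map_sub, s.eta_sum_smul_xi] at h
  exact (sub_eq_zero.mp h.symm)

lemma Q_f (X : V) : s.Q (s.f X) = s.f (s.Q X) := by
  simpa [s.eta_f, s.hf3] using (s.hf2 (s.f X)).symm

lemma g_xi (i : Fin p) (X : V) : s.g (s.ξ i) X = s.η i X := by
  obtain ⟨Z, rfl⟩ := s.hQbij.2 X
  have h := s.hgcompat (s.ξ i) Z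
  simp only [s.f_xi, map_zero, LinearMap.zero_apply, s.hetaxi, ite_mul, one_mul, zero_mul,
    Finset.sum_ite_eq', Finset.mem_univ, if_true] at h
  rw [s.eta_Q]
  linear_combination h

lemma g_f_left (X Y : V) : s.g (s.f X) Y = -s.g X (s.f Y) := by
  obtain ⟨W, rfl⟩ := s.hQbij.2 Y
  have hξ : ∀ k, s.g (s.f X) (s.ξ k) = 0 := fun k => by rw [s.hgsymm, s.g_xi, s.eta_f]
  simpa only [s.hf2 W, map_sub, map_sum, map_smul, hξ, smul_zero, Finset.sum_const_zero,
    sub_zero, s.eta_f, mul_zero, add_zero, s.Q_f] using s.hgcompat X (s.f W)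

lemma g_f_f_left (X Y : V) : s.g (s.f (s.f X)) Y = s.g X (s.f (s.f Y)) := by
  rw [s.g_f_left, s.g_f_left, neg_neg]

lemma exists_eq_f_add_sum (X : V) : ∃ U, X = s.f U + ∑ k, s.η k X • s.ξ k := by
  obtain ⟨U, hU⟩ : X - ∑ k, s.η k X • s.ξ k ∈ LinearMap.range s.f :=
    (s.hrange _).mpr fun j => by rw [map_sub, s.eta_sum_smul_xi, sub_self]
  exact ⟨U, by rw [hU, sub_add_cancel]⟩

lemma lieg_symm (Z X Y : V) : s.Lieg Z X Y = s.Lieg Z Y X := by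
  simp only [Lieg, s.hgsymm X Y, s.hgsymm (s.b Z X) Y, s.hgsymm X (s.b Z Y)]
  ring

lemma lieg_add_left (Z X X' Y : V) : s.Lieg Z (X + X') Y = s.Lieg Z X Y + s.Lieg Z X' Y := by
  simp only [Lieg, s.b_add_right, map_add, LinearMap.add_apply, s.hactadd]
  ring

lemma lieg_smul_left (Z : V) (a : C) (X Y : V) : s.Lieg Z (a • X) Y = a • s.Lieg Z X Y := by
  simp only [Lieg, s.hbleib, map_add, map_smul, LinearMap.add_apply, LinearMap.smul_apply,
    smul_eq_mul, s.hactmul]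
  ring

def liegBilin (Z : V) : V →ₗ[C] V →ₗ[C] C :=
  LinearMap.mk₂ C (s.Lieg Z) (s.lieg_add_left Z) (s.lieg_smul_left Z)
    (fun X Y Y' => by rw [s.lieg_symm, s.lieg_add_left, s.lieg_symm Z Y, s.lieg_symm Z Y'])
    (fun a X Y => by rw [s.lieg_symm, s.lieg_smul_left, s.lieg_symm Z Y])

lemma bilin_eq_zero_of_xi_of_f_f (B : V →ₗ[C] V →ₗ[C] C) (hB : ∀ X Y, B X Y = B Y X)
    (hξ : ∀ j Y, B (s.ξ j) Y = 0) (hf : ∀ U W, B (s.f U) (s.f W) = 0) (X Y : V) :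
    B X Y = 0 := by
  have hsum : ∀ (a : Fin p → C) Y, B (∑ k, a k • s.ξ k) Y = 0 := fun a Y => by
    simp [map_sum, hξ]
  obtain ⟨U, hU⟩ := s.exists_eq_f_add_sum X
  obtain ⟨W, hW⟩ := s.exists_eq_f_add_sum Y
  rw [hU, map_add, LinearMap.add_apply, hsum, add_zero, hW, map_add, hf, zero_add, hB, hsum]

lemma lieg_eq_g_nabla (Z X Y : V) :
    s.Lieg Z X Y = s.g (s.nabla X Z) Y + s.g X (s.nabla Y Z) := by
  rw [Lieg, s.hmetric, ← s.htors Z X, ← s.htors Z Y]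
  simp only [map_sub, LinearMap.sub_apply]
  ring

variable [Algebra ℝ C]

lemma nabla_eq_zero_of_killing {Z W : V} (hZ : ∀ X Y, s.Lieg Z X Y = 0)
    (hW : ∀ X Y, s.Lieg W X Y = 0) (hZW : ∀ X, s.act X (s.g Z W) = 0) (hb : s.b Z W = 0) :
    s.nabla Z W = 0 := by
  have hsymm : s.nabla W Z = s.nabla Z W := (sub_eq_zero.mp (by rw [s.htors, hb])).symm
  refine s.hgnondeg _ fun Y => ?_
  have killW := s.lieg_eq_g_nabla W Z Y
  have killZ := s.lieg_eq_g_nabla Z W Y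
  have hmet := s.hmetric Y Z W
  rw [hW] at killW
  rw [hZ, hsymm] at killZ
  rw [hZW, s.hgsymm (s.nabla Y Z)] at hmet
  have h2 : (2 : ℝ) • s.g (s.nabla Z W) Y = 0 := by
    rw [two_smul]
    linear_combination -killW - killZ + hmet
  exact (smul_eq_zero.mp h2).resolve_left two_ne_zero

section ParaK

variable {s}

lemma act_xi_g_f (hPhi : ∀ X Y Z, s.dPhi X Y Z = 0) (i : Fin p) (X Y : V) :
    s.act (s.ξ i) (s.g X (s.f Y)) =
      s.g (s.b (s.ξ i) X) (s.f Y) - s.g (s.b (s.ξ i) Y) (s.f X) := by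
  have h := hPhi (s.ξ i) X Y
  rw [dPhi, smul_eq_zero] at h
  replace h := h.resolve_left (by norm_num)
  simp only [Phi, s.f_xi, map_zero, s.act_zero, s.g_xi, s.eta_f, s.hbskew Y, map_neg,
    LinearMap.neg_apply] at h
  linear_combination h

variable [Module ℝ V] [IsScalarTower ℝ C V] (hN : ∀ X Y, s.N1 X Y = 0)
include hN

lemma two_smul_dEta (j : Fin p) (X Y : V) :
    (2 : ℝ) • s.dEta j X Y = s.η j (s.b (s.f X) (s.f Y)) := by
  have h := congrArg (s.η j) (sub_eq_zero.mp (hN X Y))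
  simp only [Nij, map_add, map_sub, s.eta_f, sub_zero, zero_add,
    LinearMap.map_smul_of_tower, s.eta_sum_smul_xi] at h
  exact h.symm

lemma dEta_xi_left (j i : Fin p) (Y : V) : s.dEta j (s.ξ i) Y = 0 := by
  have h := two_smul_dEta hN j (s.ξ i) Y
  rw [s.f_xi, s.b_zero_left, map_zero] at h
  exact (smul_eq_zero.mp h).resolve_left two_ne_zero

lemma act_xi_eta (i j : Fin p) (Y : V) :
    s.act (s.ξ i) (s.η j Y) = s.η j (s.b (s.ξ i) Y) := by
  have h := dEta_xi_left hN j i Y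
  rw [dEta, smul_eq_zero, s.act_eta_xi, sub_zero, sub_eq_zero] at h
  exact h.resolve_left (by norm_num)

lemma f_f_b_xi (i : Fin p) (Y : V) :
    s.f (s.f (s.b (s.ξ i) Y)) = s.f (s.b (s.ξ i) (s.f Y)) := by
  have h := hN (s.ξ i) Y
  simp only [N1, Nij, dEta_xi_left hN, zero_smul, Finset.sum_const_zero, smul_zero, sub_zero,
    s.f_xi, s.b_zero_left, map_zero, add_zero] at h
  exact sub_eq_zero.mp h

variable (hPhi : ∀ X Y Z, s.dPhi X Y Z = 0)
include hPhi

lemma b_xi_xi (i j : Fin p) : s.b (s.ξ i) (s.ξ j) = 0 := by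
  refine s.hrank _ (fun k => ?_) (fun Y => ?_)
  · rw [← act_xi_eta hN, s.act_eta_xi]
  · have h := act_xi_g_f hPhi i (s.ξ j) Y
    rwa [s.g_xi, s.eta_f, s.act_zero, s.f_xi, map_zero, sub_zero, eq_comm] at h

lemma lieg_xi_xi (i j : Fin p) (Y : V) : s.Lieg (s.ξ i) (s.ξ j) Y = 0 := by
  simp only [Lieg, b_xi_xi hN hPhi, s.g_xi, act_xi_eta hN, map_zero, LinearMap.zero_apply]
  ring

lemma lieg_xi_f_f (i : Fin p) (U W : V) : s.Lieg (s.ξ i) (s.f U) (s.f W) = 0 := by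
  have hW : s.g (s.f U) (s.b (s.ξ i) (s.f W)) = -s.g U (s.f (s.f (s.b (s.ξ i) W))) := by
    rw [s.g_f_left, f_f_b_xi hN]
  rw [Lieg, act_xi_g_f hPhi, hW, ← s.g_f_f_left, s.hgsymm (s.f (s.f (s.b (s.ξ i) W)))]
  ring

lemma lieg_xi (i : Fin p) (X Y : V) : s.Lieg (s.ξ i) X Y = 0 :=
  s.bilin_eq_zero_of_xi_of_f_f (s.liegBilin (s.ξ i)) (s.lieg_symm _)
    (lieg_xi_xi hN hPhi i) (lieg_xi_f_f hN hPhi i) X Y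

lemma nabla_xi_xi (i j : Fin p) : s.nabla (s.ξ i) (s.ξ j) = 0 :=
  s.nabla_eq_zero_of_killing (lieg_xi hN hPhi i) (lieg_xi hN hPhi j)
    (fun X => by rw [s.g_xi, s.act_eta_xi]) (b_xi_xi hN hPhi i j)

end ParaK

end MWPF

/-- on a weak para-K-manifold (normal, `dΦ = 0`), each `ξ_i` is Killing and
`∇_{ξ_i} ξ_j = 0`; consequently `ker f` is integrable and defines a totally geodesic
Riemannian foliation with flat leaves. -/
theorem paraK_xi_Killing {C V : Type*} [CommRing C] [Algebra ℝ C] [AddCommGroup V]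
    [Module ℝ V] [Module C V] [IsScalarTower ℝ C V] {p : ℕ} (s : MWPF C V p)
    (hN : ∀ X Y, s.N1 X Y = 0) (hPhi : ∀ X Y Z, s.dPhi X Y Z = 0) :
    (∀ (i : Fin p) (X Y : V), s.Lieg (s.ξ i) X Y = 0) ∧
    (∀ i j : Fin p, s.nabla (s.ξ i) (s.ξ j) = 0) ∧
    (∀ i j : Fin p, s.b (s.ξ i) (s.ξ j) ∈ Submodule.span C (Set.range s.ξ)) ∧
    (∀ i j : Fin p, s.g (s.Rm (s.ξ i) (s.ξ j) (s.ξ j)) (s.ξ i) = 0) := by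
  refine ⟨MWPF.lieg_xi hN hPhi, MWPF.nabla_xi_xi hN hPhi, fun i j => ?_, fun i j => ?_⟩
  · rw [MWPF.b_xi_xi hN hPhi]
    exact Submodule.zero_mem _
  · simp only [MWPF.Rm, MWPF.nabla_xi_xi hN hPhi, MWPF.b_xi_xi hN hPhi, s.nabla_zero_left,
      s.nabla_zero_right, sub_self, map_zero, LinearMap.zero_apply]
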